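/- arXiv:2410.24222 — 3 statements merged into one kernel-verified Lean document; each statement's English description precedes it below -/
import Mathlib

section
/- Let K be an n×n symmetric positive definite matrix, D = diag(K)^{−1/2} (the diagonal matrix with entries K_{ii}^{−1/2}), and K̂ = D K D. Then the smallest eigenvalue of K̂ satisfies λ_min(K̂) ≥ λ_min(K) / λ_max(K). -/
/-!
If `v` is a unit eigenvector of `K̂ = D K D` with eigenvalue `μ`, then
`μ = (D v)ᵀ K (D v) ≥ λ_min ‖D v‖²`, and `‖D v‖² = ∑ v_j² / K_jj ≥ 1 / λ_max` because every
diagonal entry `K_jj = e_jᵀ K e_j` is at most `λ_max`.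
-/

open Matrix

namespace Matrix

variable {ι : Type*} [Fintype ι]

lemma dotProduct_transpose_mul_mul_mulVec {R : Type*} [CommSemiring R] (A B : Matrix ι ι R)
    (x : ι → R) : x ⬝ᵥ (Bᵀ * A * B) *ᵥ x = (B *ᵥ x) ⬝ᵥ A *ᵥ (B *ᵥ x) := by
  rw [← mulVec_mulVec, ← mulVec_mulVec, dotProduct_mulVec, ← mulVec_transpose, transpose_transpose]

variable [DecidableEq ι]

lemma vecMul_dotProduct_vecMul_of_mem_unitaryGroup {U : Matrix ι ι ℝ}
    (hU : U ∈ unitaryGroup ι ℝ) (x : ι → ℝ) : (x ᵥ* U) ⬝ᵥ (x ᵥ* U) = x ⬝ᵥ x := by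
  rw [← dotProduct_mulVec, ← mulVec_transpose, mulVec_mulVec,
    ← conjTranspose_eq_transpose_of_trivial, ← star_eq_conjTranspose,
    mem_unitaryGroup_iff.mp hU, one_mulVec]

lemma dotProduct_self_div_le_diagonal_inv_sqrt_mulVec {d : ι → ℝ} {M : ℝ} (hd : ∀ j, 0 < d j)
    (hdM : ∀ j, d j ≤ M) (v : ι → ℝ) :
    v ⬝ᵥ v / M ≤ (diagonal fun j => (√(d j))⁻¹) *ᵥ v ⬝ᵥ (diagonal fun j => (√(d j))⁻¹) *ᵥ v := by
  simp only [dotProduct, mulVec_diagonal, Finset.sum_div]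
  refine Finset.sum_le_sum fun j _ => ?_
  have hsq : (√(d j))⁻¹ * v j * ((√(d j))⁻¹ * v j) = v j * v j / d j := by
    rw [← Real.mul_self_sqrt (hd j).le, Real.sqrt_mul_self (Real.sqrt_nonneg _)]; ring
  rw [hsq]
  exact div_le_div_of_nonneg_left (mul_self_nonneg _) (hd j) (hdM j)

namespace IsHermitian

variable {A : Matrix ι ι ℝ} (hA : A.IsHermitian)
include hA

lemma dotProduct_mulVec_eq_sum_eigenvalues (x : ι → ℝ) :
    x ⬝ᵥ A *ᵥ x = ∑ j, hA.eigenvalues j * (x ᵥ* hA.eigenvectorUnitary) j ^ 2 := by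
  conv_lhs => rw [hA.spectral_theorem, Unitary.conjStarAlgAut_apply]
  rw [← mulVec_mulVec, ← mulVec_mulVec, dotProduct_mulVec, dotProduct_mulVec,
    star_eq_conjTranspose, conjTranspose_eq_transpose_of_trivial, mulVec_transpose]
  simp only [dotProduct, vecMul_diagonal, Function.comp_apply, RCLike.ofReal_real_eq_id, id_eq]
  exact Finset.sum_congr rfl fun j _ => by ring

lemma iInf_eigenvalues_mul_dotProduct_self_le (x : ι → ℝ) :
    (⨅ j, hA.eigenvalues j) * (x ⬝ᵥ x) ≤ x ⬝ᵥ A *ᵥ x := by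
  rw [hA.dotProduct_mulVec_eq_sum_eigenvalues,
    ← vecMul_dotProduct_vecMul_of_mem_unitaryGroup hA.eigenvectorUnitary.2 x, dotProduct,
    Finset.mul_sum]
  exact Finset.sum_le_sum fun j _ => by
    rw [← sq]
    exact mul_le_mul_of_nonneg_right (ciInf_le (Set.finite_range _).bddBelow j) (sq_nonneg _)

lemma dotProduct_mulVec_le_iSup_eigenvalues_mul (x : ι → ℝ) :
    x ⬝ᵥ A *ᵥ x ≤ (⨆ j, hA.eigenvalues j) * (x ⬝ᵥ x) := by
  rw [hA.dotProduct_mulVec_eq_sum_eigenvalues,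
    ← vecMul_dotProduct_vecMul_of_mem_unitaryGroup hA.eigenvectorUnitary.2 x, dotProduct,
    Finset.mul_sum]
  exact Finset.sum_le_sum fun j _ => by
    rw [← sq]
    exact mul_le_mul_of_nonneg_right (le_ciSup (Set.finite_range _).bddAbove j) (sq_nonneg _)

lemma diag_le_iSup_eigenvalues (i : ι) : A i i ≤ ⨆ j, hA.eigenvalues j := by
  simpa [mulVec_single_one] using hA.dotProduct_mulVec_le_iSup_eigenvalues_mul (Pi.single i 1)

lemma eigenvalues_eq_dotProduct_mulVec (i : ι) :
    hA.eigenvalues i = (hA.eigenvectorBasis i).ofLp ⬝ᵥ A *ᵥ (hA.eigenvectorBasis i).ofLp := by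
  simpa using hA.eigenvalues_eq i

lemma dotProduct_self_eigenvectorBasis (i : ι) :
    (hA.eigenvectorBasis i).ofLp ⬝ᵥ (hA.eigenvectorBasis i).ofLp = 1 := by
  have h := real_inner_self_eq_norm_sq (hA.eigenvectorBasis i)
  rw [hA.eigenvectorBasis.orthonormal.1 i, one_pow, EuclideanSpace.inner_eq_star_dotProduct] at h
  simpa using h

end IsHermitian

end Matrix

theorem stmt_4 (n : ℕ) (K : Matrix (Fin (n + 1)) (Fin (n + 1)) ℝ) (hK : K.PosDef)
    (Khat : Matrix (Fin (n + 1)) (Fin (n + 1)) ℝ)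
    (hKhatdef : Khat =
      Matrix.diagonal (fun i => (Real.sqrt (K i i))⁻¹) * K *
        Matrix.diagonal (fun i => (Real.sqrt (K i i))⁻¹))
    (hKhat : Khat.IsHermitian) :
    ∀ i, (⨅ j, hK.1.eigenvalues j) / (⨆ j, hK.1.eigenvalues j) ≤ hKhat.eigenvalues i := by
  intro i
  subst hKhatdef
  set lmin := ⨅ j, hK.1.eigenvalues j
  set lmax := ⨆ j, hK.1.eigenvalues j
  set D := diagonal fun j => (√(K j j))⁻¹
  set v := (hKhat.eigenvectorBasis i).ofLp
  have hμ : hKhat.eigenvalues i = (D *ᵥ v) ⬝ᵥ K *ᵥ (D *ᵥ v) := by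
    rw [hKhat.eigenvalues_eq_dotProduct_mulVec, ← dotProduct_transpose_mul_mul_mulVec,
      diagonal_transpose]
  have hDv : 1 / lmax ≤ (D *ᵥ v) ⬝ᵥ (D *ᵥ v) := by
    have h := dotProduct_self_div_le_diagonal_inv_sqrt_mulVec (fun j => hK.diag_pos)
      hK.1.diag_le_iSup_eigenvalues v
    rwa [show v ⬝ᵥ v = 1 from hKhat.dotProduct_self_eigenvectorBasis i] at h
  have hmin : 0 ≤ lmin := Real.iInf_nonneg fun j => (hK.eigenvalues_pos j).le
  calc lmin / lmax = lmin * (1 / lmax) := (mul_one_div _ _).symm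
    _ ≤ lmin * ((D *ᵥ v) ⬝ᵥ (D *ᵥ v)) := mul_le_mul_of_nonneg_left hDv hmin
    _ ≤ (D *ᵥ v) ⬝ᵥ K *ᵥ (D *ᵥ v) := hK.1.iInf_eigenvalues_mul_dotProduct_self_le _
    _ = hKhat.eigenvalues i := hμ.symm
end

section
/- Let K be an n×n symmetric positive definite matrix, D = diag(K)^{−1/2}, and K̂ = D K D. Then the largest eigenvalue of K̂ satisfies λ_max(K̂) ≤ λ_max(K) / λ_min(K). -/
/-!
In the Loewner order `λ_min • 1 ≤ K ≤ λ_max • 1`. Conjugating the upper bound by the diagonal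
matrix `D` gives `K̂ ≤ λ_max • D² = diag (λ_max / K_ii)`, and the lower bound forces
`λ_min ≤ K_ii`, so `K̂ ≤ (λ_max / λ_min) • 1`, which bounds every eigenvalue of `K̂`.
-/

open Matrix
open scoped MatrixOrder

namespace Matrix

variable {m : Type*}

theorem diagonal_le_diagonal [DecidableEq m] {d e : m → ℝ} (h : d ≤ e) :
    diagonal d ≤ diagonal e := by
  rw [le_iff, diagonal_sub, posSemidef_diagonal_iff]
  exact fun i => sub_nonneg.mpr (h i)

variable [Fintype m] [DecidableEq m]

theorem le_diag_of_algebraMap_le {A : Matrix m m ℝ} {c : ℝ} (h : algebraMap ℝ _ c ≤ A)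
    (i : m) : c ≤ A i i := by
  simpa [algebraMap_eq_diagonal, sub_nonneg] using (le_iff.mp h).diag_nonneg (i := i)

theorem diagonal_mul_algebraMap_mul_diagonal {R : Type*} [CommSemiring R] (d : m → R) (c : R) :
    diagonal d * algebraMap R _ c * diagonal d = diagonal fun i => c * d i ^ 2 := by
  rw [algebraMap_eq_diagonal, diagonal_mul_diagonal, diagonal_mul_diagonal]
  congr 1
  ext i
  simp only [Pi.algebraMap_apply, Algebra.algebraMap_self, RingHom.id_apply]
  ring

variable {𝕜 : Type*} [RCLike 𝕜] {A : Matrix m m 𝕜}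

theorem IsHermitian.le_algebraMap_iff_eigenvalues_le (hA : A.IsHermitian) {c : ℝ} :
    A ≤ algebraMap ℝ _ c ↔ ∀ i, hA.eigenvalues i ≤ c := by
  rw [le_algebraMap_iff_spectrum_le hA.isSelfAdjoint, hA.spectrum_real_eq_range_eigenvalues,
    Set.forall_mem_range]

theorem IsHermitian.algebraMap_le_iff_le_eigenvalues (hA : A.IsHermitian) {c : ℝ} :
    algebraMap ℝ _ c ≤ A ↔ ∀ i, c ≤ hA.eigenvalues i := by
  rw [algebraMap_le_iff_le_spectrum hA.isSelfAdjoint, hA.spectrum_real_eq_range_eigenvalues,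
    Set.forall_mem_range]

end Matrix

theorem stmt_5 (n : ℕ) (K : Matrix (Fin (n + 1)) (Fin (n + 1)) ℝ) (hK : K.PosDef)
    (Khat : Matrix (Fin (n + 1)) (Fin (n + 1)) ℝ)
    (hKhatdef : Khat =
      Matrix.diagonal (fun i => (Real.sqrt (K i i))⁻¹) * K *
        Matrix.diagonal (fun i => (Real.sqrt (K i i))⁻¹))
    (hKhat : Khat.IsHermitian) :
    ∀ i, hKhat.eigenvalues i ≤ (⨆ j, hK.1.eigenvalues j) / (⨅ j, hK.1.eigenvalues j) := by
  set a := ⨆ j, hK.1.eigenvalues j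
  set b := ⨅ j, hK.1.eigenvalues j
  have hKa : K ≤ algebraMap ℝ _ a := hK.1.le_algebraMap_iff_eigenvalues_le.mpr
    fun j => le_ciSup (Set.finite_range _).bddAbove j
  have hbK : algebraMap ℝ _ b ≤ K := hK.1.algebraMap_le_iff_le_eigenvalues.mpr
    fun j => ciInf_le (Set.finite_range _).bddBelow j
  have hb : 0 < b := by
    obtain ⟨j, hj⟩ := exists_eq_ciInf_of_finite (f := hK.1.eigenvalues)
    exact (hK.eigenvalues_pos j).trans_eq hj
  have ha : 0 ≤ a := hb.le.trans <| (ciInf_le (Set.finite_range _).bddBelow 0).trans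
    (le_ciSup (Set.finite_range _).bddAbove 0)
  have hD : IsSelfAdjoint (diagonal fun i => (Real.sqrt (K i i))⁻¹) := isHermitian_diagonal _
  rw [← hKhat.le_algebraMap_iff_eigenvalues_le]
  calc Khat ≤ diagonal (fun i => (Real.sqrt (K i i))⁻¹) * algebraMap ℝ _ a *
        diagonal (fun i => (Real.sqrt (K i i))⁻¹) := hKhatdef ▸ hD.conjugate_le_conjugate hKa
    _ = diagonal fun i => a / K i i := by
      rw [diagonal_mul_algebraMap_mul_diagonal]
      congr 1
      ext i
      rw [inv_pow, Real.sq_sqrt hK.diag_pos.le, div_eq_mul_inv]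
    _ ≤ diagonal fun _ => a / b := diagonal_le_diagonal fun i =>
      div_le_div_of_nonneg_left ha hb (le_diag_of_algebraMap_le hbK i)
    _ = algebraMap ℝ _ (a / b) := by rw [algebraMap_eq_diagonal]; rfl
end

section
/- With K(ρ) = K₀ + D_ρ positive definite and α = K(ρ)⁻¹y, the Hessian of the negative log marginal likelihood −2L(ρ) = yᵀK(ρ)⁻¹y + log det K(ρ) with respect to ρ is the matrix (2ααᵀ − K(ρ)⁻¹) ∘ K(ρ)⁻¹, where ∘ denotes the Hadamard product; i.e., ∂²(−2L)/∂ρᵢ∂ρⱼ = [2ααᵀ − K⁻¹]_{ij}[K⁻¹]_{ij}. -/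
/-!
Along `ρ + t eⱼ` the kernel matrix moves on the line `K + t Eⱼⱼ`, so the derivative of `K⁻¹` is
the rank-one matrix `-K⁻¹ Eⱼⱼ K⁻¹ = -(K⁻¹ eⱼ)(eⱼᵀ K⁻¹)`. The `i`-th component of the gradient of
`-2L` is `[K⁻¹ - ααᵀ]ᵢᵢ`; differentiating it with this formula and `α = K⁻¹ y` gives
`-(K⁻¹)ᵢⱼ (K⁻¹)ⱼᵢ + 2 αᵢ (K⁻¹)ᵢⱼ αⱼ`, which is the claimed entry because `K⁻¹` is symmetric.
-/

open Matrix

attribute [local instance] Matrix.linftyOpNormedRing Matrix.linftyOpNormedAlgebra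

section MatrixCurves

variable {𝕜 m : Type*} [RCLike 𝕜] [Fintype m] [DecidableEq m]
  {A : 𝕜 → Matrix m m 𝕜} {A' : Matrix m m 𝕜} {t : 𝕜}

theorem HasDerivAt.matrix_apply (hA : HasDerivAt A A' t) (a b : m) :
    HasDerivAt (fun s => A s a b) (A' a b) t :=
  ((entryLinearMap 𝕜 𝕜 a b).toContinuousLinearMap.hasFDerivAt).comp_hasDerivAt t hA

theorem HasDerivAt.matrix_mulVec_apply (hA : HasDerivAt A A' t) (y : m → 𝕜) (a : m) :
    HasDerivAt (fun s => (A s *ᵥ y) a) ((A' *ᵥ y) a) t := by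
  simp only [mulVec, dotProduct]
  exact HasDerivAt.fun_sum fun k _ => (hA.matrix_apply a k).mul_const (y k)

theorem HasDerivAt.matrix_inv (hA : HasDerivAt A A' t) (ht : IsUnit (A t)) :
    HasDerivAt (fun s => (A s)⁻¹) (-((A t)⁻¹ * A' * (A t)⁻¹)) t := by
  obtain ⟨u, hu⟩ := ht
  have hinv := hasFDerivAt_ringInverse (𝕜 := 𝕜) u
  rw [← Ring.inverse_unit, hu] at hinv
  have h := hinv.comp_hasDerivAt t hA
  simp only [Function.comp_def, ← nonsing_inv_eq_ringInverse] at h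
  exact h

theorem hasDerivAt_matrix_inv_add_smul {M : Matrix m m 𝕜} (hM : IsUnit M) (E : Matrix m m 𝕜) :
    HasDerivAt (fun s : 𝕜 => (M + s • E)⁻¹) (-(M⁻¹ * E * M⁻¹)) 0 := by
  have hline := ((hasDerivAt_id (0 : 𝕜)).smul_const E).const_add M
  simp only [id_eq, one_smul] at hline
  simpa only [zero_smul, add_zero] using hline.matrix_inv (by simpa using hM)

end MatrixCurves

theorem Matrix.mul_single_one_mul {R m : Type*} [Semiring R] [Fintype m] [DecidableEq m]
    (A B : Matrix m m R) (j : m) :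
    A * single j j (1 : R) * B = vecMulVec (Aᵀ j) (B j) := by
  ext a b
  simp [mul_apply, single_apply, ite_and, vecMulVec_apply]

theorem stmt_14 (n : ℕ) (K₀ : Matrix (Fin n) (Fin n) ℝ) (hK₀ : K₀.PosDef)
    (y ρ : Fin n → ℝ) (hρ : ∀ k, 0 ≤ ρ k) (i j : Fin n)
    (α : Fin n → ℝ) (hα : α = ((K₀ + Matrix.diagonal ρ)⁻¹).mulVec y) :
    HasDerivAt
      (fun t : ℝ =>
        ((K₀ + Matrix.diagonal (ρ + t • (Pi.single j 1 : Fin n → ℝ)))⁻¹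
          - Matrix.vecMulVec
              (((K₀ + Matrix.diagonal (ρ + t • (Pi.single j 1 : Fin n → ℝ)))⁻¹).mulVec y)
              (((K₀ + Matrix.diagonal (ρ + t • (Pi.single j 1 : Fin n → ℝ)))⁻¹).mulVec y)) i i)
      ((2 • Matrix.vecMulVec α α - (K₀ + Matrix.diagonal ρ)⁻¹) i j *
        (K₀ + Matrix.diagonal ρ)⁻¹ i j) 0 := by
  set K := K₀ + diagonal ρ
  have hK : K.PosDef := hK₀.add_posSemidef (posSemidef_diagonal_iff.mpr hρ)
  have hline : ∀ t : ℝ, K₀ + diagonal (ρ + t • Pi.single j 1) = K + t • single j j 1 := by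
    intro t
    simp only [K, add_assoc, ← diagonal_single, ← diagonal_smul, diagonal_add]
    rfl
  have hinv := hasDerivAt_matrix_inv_add_smul hK.isUnit (single j j (1 : ℝ))
  have hsymm : K⁻¹ j i = K⁻¹ i j := by simpa using hK.isHermitian.inv.apply i j
  have hKEK : (K⁻¹ * single j j (1 : ℝ) * K⁻¹) i i = K⁻¹ i j ^ 2 := by
    rw [mul_single_one_mul, vecMulVec_apply, transpose_apply, hsymm, sq]
  have hKEKy : ((K⁻¹ * single j j (1 : ℝ) * K⁻¹) *ᵥ y) i = K⁻¹ i j * α j := by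
    rw [mul_single_one_mul, vecMulVec_mulVec, hα]
    simp only [Pi.smul_apply, op_smul_eq_smul, smul_eq_mul, transpose_apply]
    exact mul_comm _ _
  simp only [hline, Matrix.sub_apply, vecMulVec_apply]
  refine ((hinv.matrix_apply i i).fun_sub
    ((hinv.matrix_mulVec_apply y i).fun_mul (hinv.matrix_mulVec_apply y i))).congr_deriv ?_
  simp only [zero_smul, add_zero, Matrix.neg_apply, neg_mulVec, Pi.neg_apply, hKEK, hKEKy, ← hα,
    Matrix.smul_apply, vecMulVec_apply, nsmul_eq_mul]
  ring
end
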